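/- For all real numbers α₁, α₂ with 0 < α₁ < α₂ < 1/2, we have h_b(α₂) − h_b(α₁) + h_b(α₁/α₂) − h_b((α₂−α₁)/(1−α₁)) > 0. -/

import Mathlib

/-!
Expanding the joint entropy of bits `X ≤ Y` with `P(X = 1) = α₁`, `P(Y = 1) = α₂` by the chain
rule in both orders gives `h(α₂) + α₂ h(α₁/α₂) = h(α₁) + (1 - α₁) h((α₂-α₁)/(1-α₁))`,
which turns the expression into `(1 - α₂) h(x) - α₁ h(y)` with `x = α₁/α₂`, `y = (1-α₂)/(1-α₁)`,
that is `α₁ (1 - α₂) (g(x)/α₂ - g(y)/(1-α₁))` for `g(p) = h(p)/p`. Since `α₁ < α₂ < 1/2` we have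
`x < y` and `α₂ < 1 - α₁`, and `g` is strictly decreasing because `h` is strictly concave with
`h(0) = 0`.
-/

/-- Binary entropy (natural log). -/
noncomputable def binEnt (p : ℝ) : ℝ := -(p * Real.log p) - (1 - p) * Real.log (1 - p)

open Real Set

lemma binEnt_eq_binEntropy : binEnt = binEntropy := by
  ext p
  simp only [binEnt, binEntropy, log_inv]
  ring

lemma binEntropy_add_mul_binEntropy_div {a b : ℝ} (ha : 0 < a) (hab : a < b) (hb : b < 1) :
    binEntropy b + b * binEntropy (a / b) =
      binEntropy a + (1 - a) * binEntropy ((b - a) / (1 - a)) := by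
  have hb₀ : b ≠ 0 := (ha.trans hab).ne'
  have ha₁ : 1 - a ≠ 0 := by linarith
  have hab' : b - a ≠ 0 := by linarith
  have hb₁ : 1 - b ≠ 0 := by linarith
  have e₁ : 1 - a / b = (b - a) / b := by field_simp
  have e₂ : 1 - (b - a) / (1 - a) = (1 - b) / (1 - a) := by field_simp; ring
  simp only [binEntropy, e₁, e₂, log_inv, log_div ha.ne' hb₀, log_div hab' hb₀,
    log_div hab' ha₁, log_div hb₁ ha₁]
  field_simp
  ring

lemma strictAntiOn_binEntropy_div_self : StrictAntiOn (fun p ↦ binEntropy p / p) (Ioc 0 1) := by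
  intro x hx y hy hxy
  simpa using strictConcave_binEntropy.secant_strict_mono (a := 0) (by simp)
    (Ioc_subset_Icc_self hx) (Ioc_subset_Icc_self hy) hx.1.ne' hy.1.ne' hxy

/-- For `0 < α₁ < α₂ < 1/2`,
`h_b(α₂) − h_b(α₁) + h_b(α₁/α₂) − h_b((α₂−α₁)/(1−α₁)) > 0`. -/
theorem entropy_difference_pos (α₁ α₂ : ℝ)
    (h1 : 0 < α₁) (h12 : α₁ < α₂) (h2 : α₂ < 1 / 2) :
    0 < binEnt α₂ - binEnt α₁ + binEnt (α₁ / α₂) - binEnt ((α₂ - α₁) / (1 - α₁)) := by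
  have hα₂ : 0 < α₂ := h1.trans h12
  have hα₁' : 0 < 1 - α₁ := by linarith
  have hgroup := binEntropy_add_mul_binEntropy_div h1 h12 (by linarith)
  have hsym : binEntropy ((α₂ - α₁) / (1 - α₁)) = binEntropy ((1 - α₂) / (1 - α₁)) := by
    rw [← binEntropy_one_sub]; congr 1; field_simp; ring
  rw [binEnt_eq_binEntropy, hsym]
  rw [hsym] at hgroup
  set x := α₁ / α₂ with hx_def
  set y := (1 - α₂) / (1 - α₁) with hy_def
  have hx : x ∈ Ioc 0 1 := ⟨by positivity, (div_le_one hα₂).2 h12.le⟩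
  have hy : y ∈ Ioc 0 1 := ⟨div_pos (by linarith) hα₁', (div_le_one hα₁').2 (by linarith)⟩
  have hxy : x < y := by rw [div_lt_div_iff₀ hα₂ hα₁']; nlinarith
  have hgy : 0 ≤ binEntropy y / y := div_nonneg (binEntropy_nonneg hy.1.le hy.2) hy.1.le
  calc 0 < α₁ * (1 - α₂) * ((binEntropy x / x) / α₂ - (binEntropy y / y) / (1 - α₁)) := by
        refine mul_pos (mul_pos h1 (by linarith)) (sub_pos.2 ?_)
        calc (binEntropy y / y) / (1 - α₁) ≤ (binEntropy y / y) / α₂ :=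
              div_le_div_of_nonneg_left hgy hα₂ (by linarith)
          _ < (binEntropy x / x) / α₂ :=
              div_lt_div_of_pos_right (strictAntiOn_binEntropy_div_self hx hy hxy) hα₂
    _ = (1 - α₂) * binEntropy x - α₁ * binEntropy y := by
        rw [div_div, div_div, hx_def, hy_def, div_mul_cancel₀ _ hα₂.ne',
          div_mul_cancel₀ _ hα₁'.ne']
        field_simp [h1.ne', (by linarith : 1 - α₂ ≠ 0)]
    _ = _ := by linarith
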